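/- arXiv:2307.03001 — 2 statements merged into one kernel-verified Lean document; each statement's English description precedes it below -/
import Mathlib

section
/- The number of lattice words w = w_1…w_n of nonnegative integers such that the partial sum w_1 + … + w_k is ≥ k exactly when k lies in a prescribed subset D ⊆ {1,…,n} with n ∈ {1,…,n}\D (and < k otherwise, including k = n) equals a product of Catalan numbers ∏ C_{ℓ_i}, where the ℓ_i are the lengths of the maximal blocks of consecutive positions with the same membership status in D. -/
open List Finset

namespace CatWords

/-- partial-sum-of-take splitting. -/
lemma sum_take_add (w : List ℕ) (k i : ℕ) :
    (w.take (k + i)).sum = (w.take k).sum + ((w.drop k).take i).sum := by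
  rw [List.take_add, List.sum_append]

lemma sum_take_mono (w : List ℕ) {k m : ℕ} (h : k ≤ m) :
    (w.take k).sum ≤ (w.take m).sum := by
  obtain ⟨i, rfl⟩ := Nat.exists_eq_add_of_le h
  rw [sum_take_add]; omega

lemma sum_take_le (w : List ℕ) (k : ℕ) : (w.take k).sum ≤ w.sum := by
  calc (w.take k).sum ≤ (w.take k).sum + (w.drop k).sum := Nat.le_add_right _ _
  _ = w.sum := List.sum_take_add_sum_drop _ _

lemma mem_le_sum {w : List ℕ} {x : ℕ} (hx : x ∈ w) : x ≤ w.sum :=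
  List.single_le_sum (fun _ _ => Nat.zero_le _) _ hx

lemma sum_take_of_append_left {u v : List ℕ} {k : ℕ} (h : k ≤ u.length) :
    ((u ++ v).take k).sum = (u.take k).sum := by
  rw [List.take_append, Nat.sub_eq_zero_of_le h]
  simp

lemma sum_take_append_right (u v : List ℕ) (j : ℕ) :
    ((u ++ v).take (u.length + j)).sum = u.sum + (v.take j).sum := by
  rw [sum_take_add]
  simp

/-- reverse and sums of takes. -/
lemma sum_take_reverse (w : List ℕ) {i : ℕ} (h : i ≤ w.length) :
    (w.reverse.take i).sum = (w.drop (w.length - i)).sum := by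
  have h1 : w.reverse = (w.drop (w.length - i)).reverse ++ (w.take (w.length - i)).reverse := by
    rw [← List.reverse_append, List.take_append_drop]
  have h2 : (w.drop (w.length - i)).reverse.length = i := by
    simp; omega
  rw [h1, List.take_append, h2, Nat.sub_self,
    List.take_of_length_le (le_of_eq h2)]
  simp [List.sum_reverse]

/-- the carrier: lists of length n with entries < b -/
def carrier : ℕ → ℕ → Finset (List ℕ)
  | 0, _ => {[]}
  | (n+1), b => ((Finset.range b) ×ˢ carrier n b).image (fun p => p.1 :: p.2)

lemma mem_carrier {n b : ℕ} {w : List ℕ} :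
    w ∈ carrier n b ↔ w.length = n ∧ ∀ x ∈ w, x < b := by
  induction n generalizing w with
  | zero =>
    constructor
    · intro h; simp only [carrier, Finset.mem_singleton] at h; simp [h]
    · rintro ⟨h, -⟩; simp [carrier, List.length_eq_zero_iff.1 h]
  | succ n ih =>
    simp only [carrier, Finset.mem_image, Finset.mem_product, Finset.mem_range, Prod.exists]
    constructor
    · rintro ⟨a, t, ⟨ha, ht⟩, rfl⟩
      obtain ⟨h1, h2⟩ := ih.1 ht
      refine ⟨by simp [h1], ?_⟩
      intro x hx
      rcases List.mem_cons.1 hx with rfl | hx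
      · exact ha
      · exact h2 x hx
    · rintro ⟨hl, hb⟩
      match w with
      | a :: t =>
        exact ⟨a, t, ⟨hb a (by simp), ih.2 ⟨by simpa using hl, fun x hx => hb x (by simp [hx])⟩⟩, rfl⟩

-- words with all partial sums s_k < k
open scoped Classical in
noncomputable def AF (l : ℕ) : Finset (List ℕ) :=
  (carrier l l).filter (fun w => ∀ k, 1 ≤ k → k ≤ l → (w.take k).sum < k)

-- sum = length - 1 variant
open scoped Classical in
noncomputable def AF' (j : ℕ) : Finset (List ℕ) :=
  (carrier j j).filter (fun w => (∀ k, 1 ≤ k → k ≤ j → (w.take k).sum < k) ∧ w.sum + 1 = j)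

-- words with partial sums ≥ k, total = length
open scoped Classical in
noncomputable def PF (l : ℕ) : Finset (List ℕ) :=
  (carrier l (l+1)).filter (fun w => (∀ k, 1 ≤ k → k ≤ l → k ≤ (w.take k).sum) ∧ w.sum = l)

def OkP (b : List Bool) (w : List ℕ) : Prop :=
  ∀ j, j < b.length → ((j+1) ≤ (w.take (j+1)).sum ↔ b.getD j false = true)

open scoped Classical in
noncomputable def okF (b : List Bool) : Finset (List ℕ) :=
  (carrier b.length b.length).filter (fun w => OkP b w)

lemma mem_AF {l : ℕ} {w : List ℕ} :
    w ∈ AF l ↔ w.length = l ∧ ∀ k, 1 ≤ k → k ≤ l → (w.take k).sum < k := by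
  simp only [AF, Finset.mem_filter, mem_carrier]
  constructor
  · rintro ⟨⟨h1, _⟩, h2⟩; exact ⟨h1, h2⟩
  · rintro ⟨h1, h2⟩
    refine ⟨⟨h1, fun x hx => ?_⟩, h2⟩
    rcases Nat.eq_zero_or_pos l with rfl | hl
    · simp [List.length_eq_zero_iff.1 h1] at hx
    · have := mem_le_sum hx
      have h3 := h2 l hl le_rfl
      rw [← h1, List.take_length] at h3
      omega

lemma mem_AF' {j : ℕ} {w : List ℕ} :
    w ∈ AF' j ↔ w.length = j ∧ (∀ k, 1 ≤ k → k ≤ j → (w.take k).sum < k) ∧ w.sum + 1 = j := by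
  simp only [AF', Finset.mem_filter, mem_carrier]
  constructor
  · rintro ⟨⟨h1, _⟩, h2⟩; exact ⟨h1, h2⟩
  · rintro ⟨h1, h2, h3⟩
    exact ⟨⟨h1, fun x hx => by have := mem_le_sum hx; omega⟩, h2, h3⟩

lemma mem_PF {l : ℕ} {w : List ℕ} :
    w ∈ PF l ↔ w.length = l ∧ (∀ k, 1 ≤ k → k ≤ l → k ≤ (w.take k).sum) ∧ w.sum = l := by
  simp only [PF, Finset.mem_filter, mem_carrier]
  constructor
  · rintro ⟨⟨h1, _⟩, h2⟩; exact ⟨h1, h2⟩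
  · rintro ⟨h1, h2, h3⟩
    exact ⟨⟨h1, fun x hx => by have := mem_le_sum hx; omega⟩, h2, h3⟩

/-- b ends with `false` -/
def EndsFalse (b : List Bool) : Prop := b.getLast? = some false

lemma getD_eq_getLast {b : List Bool} (hb : EndsFalse b) :
    b.getD (b.length - 1) false = false := by
  rw [EndsFalse, List.getLast?_eq_getElem?] at hb
  have hne : b ≠ [] := by rintro rfl; simp at hb
  have hlen : 0 < b.length := List.length_pos_iff.2 hne
  rw [List.getD_eq_getElem?_getD, hb]
  rfl

lemma okP_sum_lt {b : List Bool} {w : List ℕ} (hb : EndsFalse b)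
    (hl : w.length = b.length) (h : OkP b w) : w.sum < b.length := by
  have hne : b ≠ [] := by rintro rfl; simp [EndsFalse] at hb
  have hlen : 0 < b.length := List.length_pos_iff.2 hne
  have h2 := h (b.length - 1) (by omega)
  rw [getD_eq_getLast hb] at h2
  have : b.length - 1 + 1 = b.length := by omega
  rw [this] at h2
  have h3 : ¬ (b.length ≤ (w.take b.length).sum) := by
    intro hc; exact absurd (h2.1 hc) (by simp)
  rw [← hl, List.take_length] at h3
  omega

lemma mem_okF {b : List Bool} {w : List ℕ} (hb : EndsFalse b) :
    w ∈ okF b ↔ w.length = b.length ∧ OkP b w := by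
  simp only [okF, Finset.mem_filter, mem_carrier]
  constructor
  · rintro ⟨⟨h1, _⟩, h2⟩; exact ⟨h1, h2⟩
  · rintro ⟨h1, h2⟩
    refine ⟨⟨h1, fun x hx => ?_⟩, h2⟩
    have := mem_le_sum hx
    have := okP_sum_lt hb h1 h2
    omega

lemma card_AF'_succ (m : ℕ) : (AF' (m+1)).card = (AF m).card := by
  refine Finset.card_bij' (fun w _ => w.dropLast) (fun w _ => w ++ [m - w.sum]) ?_ ?_ ?_ ?_
  · intro w hw
    obtain ⟨hl, hs, hsum⟩ := mem_AF'.1 hw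
    have hd : w.dropLast = w.take m := by
      rw [List.dropLast_eq_take, hl]
      norm_num
    rw [mem_AF]
    constructor
    · rw [hd, List.length_take, hl]; omega
    · intro k hk1 hk2
      rw [hd, List.take_take, min_eq_left hk2]
      exact hs k hk1 (by omega)
  · intro w hw
    obtain ⟨hl, hs⟩ := mem_AF.1 hw
    have hwsum : w.sum ≤ m := by
      rcases Nat.eq_zero_or_pos m with rfl | hm
      · simp [List.length_eq_zero_iff.1 hl]
      · have := hs m hm le_rfl
        rw [← hl, List.take_length] at this
        omega
    rw [mem_AF']
    refine ⟨by simp [hl], ?_, ?_⟩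
    · intro k hk1 hk2
      rcases Nat.lt_or_ge k (m+1) with hk | hk
      · rw [sum_take_of_append_left (by omega : k ≤ w.length)]
        exact hs k hk1 (by omega)
      · have hkm : k = m + 1 := by omega
        have hlen : (w ++ [m - w.sum]).length = m + 1 := by simp [hl]
        rw [hkm, ← hlen, List.take_length, List.sum_append]
        simp
        omega
    · rw [List.sum_append]; simp; omega
  · intro w hw
    obtain ⟨hl, hs, hsum⟩ := mem_AF'.1 hw
    have hne : w ≠ [] := by intro h; rw [h] at hl; simp at hl
    have hsum2 : w.dropLast.sum + w.getLast hne = w.sum := by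
      conv_rhs => rw [← List.dropLast_append_getLast hne]
      simp
    have hx : m - w.dropLast.sum = w.getLast hne := by omega
    rw [hx, List.dropLast_append_getLast hne]
  · intro w _
    exact List.dropLast_concat

lemma card_PF_aux (l : ℕ) : (PF l).card = (AF' (l+1)).card := by
  refine Finset.card_bij' (fun w _ => 0 :: w.reverse) (fun w _ => w.tail.reverse) ?_ ?_ ?_ ?_
  · intro w hw
    obtain ⟨hl, hs, hsum⟩ := mem_PF.1 hw
    rw [mem_AF']
    refine ⟨by simp [hl], ?_, by simp [List.sum_reverse, hsum]⟩
    intro k hk1 hk2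
    obtain ⟨i, rfl⟩ : ∃ i, k = i + 1 := ⟨k - 1, by omega⟩
    have hi : i ≤ l := by omega
    have htake : (0 :: w.reverse).take (i+1) = 0 :: w.reverse.take i := by simp
    rw [htake]
    have hrev : (w.reverse.take i).sum = (w.drop (l - i)).sum :=
      by rw [sum_take_reverse w (by omega : i ≤ w.length), hl]
    have hsplit : (w.take (l-i)).sum + (w.drop (l-i)).sum = w.sum :=
      List.sum_take_add_sum_drop _ _
    rcases Nat.eq_zero_or_pos (l - i) with h0 | h0
    · simp only [List.sum_cons, hrev]
      have : w.take (l-i) = [] := by rw [h0]; simp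
      rw [this] at hsplit
      simp at hsplit
      omega
    · have := hs (l-i) h0 (by omega)
      simp only [List.sum_cons, hrev]
      omega
  · intro w hw
    obtain ⟨hl, hs, hsum⟩ := mem_AF'.1 hw
    match w, hl with
    | a :: t, hl =>
      have ha : a = 0 := by
        have := hs 1 le_rfl (by omega)
        simpa using this
      have htl : t.length = l := by simpa using hl
      rw [mem_PF]
      refine ⟨by simp [htl], ?_, ?_⟩
      · intro k hk1 hk2
        simp only [List.tail_cons]
        have hrev : (t.reverse.take k).sum = (t.drop (l - k)).sum := by
          rw [sum_take_reverse t (by omega : k ≤ t.length), htl]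
        have hsplit : (t.take (l-k)).sum + (t.drop (l-k)).sum = t.sum :=
          List.sum_take_add_sum_drop _ _
        have hcond := hs (l - k + 1) (by omega) (by omega)
        have htk : ((a :: t).take (l - k + 1)).sum = (t.take (l-k)).sum := by
          simp [ha]
        rw [htk] at hcond
        have htsum : t.sum = l := by
          have : (a :: t).sum = a + t.sum := by simp
          omega
        rw [hrev]
        omega
      · have : (a :: t).sum = a + t.sum := by simp
        simp only [List.tail_cons, List.sum_reverse]
        omega
  · intro w _
    simp
  · intro w hw
    obtain ⟨hl, hs, hsum⟩ := mem_AF'.1 hw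
    match w, hl with
    | a :: t, hl =>
      have ha : a = 0 := by
        have := hs 1 le_rfl (by omega)
        simpa using this
      simp [ha]

lemma card_PF (l : ℕ) : (PF l).card = (AF l).card := by
  rw [card_PF_aux, card_AF'_succ]

open scoped Classical in
lemma AF_decomp (l : ℕ) (hl : 1 ≤ l) :
    AF l = (Finset.Icc 1 l).biUnion
      (fun j => ((AF' j) ×ˢ (AF (l - j))).image (fun p => p.1 ++ p.2)) := by
  ext w
  simp only [Finset.mem_biUnion, Finset.mem_Icc, Finset.mem_image, Finset.mem_product,
    Prod.exists]
  constructor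
  · intro hw
    obtain ⟨hlen, hs⟩ := mem_AF.1 hw
    set P : ℕ → Prop := fun k => (w.take k).sum + 1 = k with hP
    have hP1 : P 1 := by
      have := hs 1 le_rfl hl
      simp only [hP]
      omega
    set j := Nat.findGreatest P l with hj
    have hj1 : 1 ≤ j := Nat.le_findGreatest hl hP1
    have hjl : j ≤ l := Nat.findGreatest_le l
    have hPj : P j := Nat.findGreatest_spec hl hP1
    refine ⟨j, ⟨hj1, hjl⟩, w.take j, w.drop j, ⟨?_, ?_⟩, List.take_append_drop j w⟩
    · rw [mem_AF']
      refine ⟨by rw [List.length_take]; omega, ?_, ?_⟩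
      · intro k hk1 hk2
        rw [List.take_take, min_eq_left hk2]
        exact hs k hk1 (by omega)
      · exact hPj
    · rw [mem_AF]
      refine ⟨by rw [List.length_drop]; omega, ?_⟩
      intro i hi1 hi2
      have hki : j + i ≤ l := by omega
      have hsplit := sum_take_add w j i
      have h1 := hs (j + i) (by omega) hki
      have h2 : ¬ P (j + i) := Nat.findGreatest_is_greatest (by omega) hki
      simp only [hP] at hPj h2
      omega
  · rintro ⟨j, ⟨hj1, hjl⟩, u, v, ⟨hu, hv⟩, rfl⟩
    obtain ⟨hul, hus, husum⟩ := mem_AF'.1 hu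
    obtain ⟨hvl, hvs⟩ := mem_AF.1 hv
    rw [mem_AF]
    refine ⟨by simp [hul, hvl]; omega, ?_⟩
    intro k hk1 hk2
    rcases Nat.lt_or_ge k (j+1) with hk | hk
    · rw [sum_take_of_append_left (by omega : k ≤ u.length)]
      exact hus k hk1 (by omega)
    · obtain ⟨i, rfl⟩ : ∃ i, k = j + i := ⟨k - j, by omega⟩
      have : ((u ++ v).take (j + i)).sum = u.sum + (v.take i).sum := by
        rw [← hul]; exact sum_take_append_right u v i
      have := hvs i (by omega) (by omega)
      omega

open scoped Classical in
lemma AF_piece_props {l j : ℕ} (hjl : j ≤ l) {w : List ℕ}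
    (hw : w ∈ ((AF' j) ×ˢ (AF (l - j))).image (fun p => p.1 ++ p.2)) :
    (w.take j).sum + 1 = j ∧ ∀ k, j < k → k ≤ l → (w.take k).sum + 1 ≠ k := by
  obtain ⟨⟨u, v⟩, hmem, rfl⟩ := Finset.mem_image.1 hw
  obtain ⟨hu, hv⟩ := Finset.mem_product.1 hmem
  dsimp only at hu hv ⊢
  obtain ⟨hul, hus, husum⟩ := mem_AF'.1 hu
  obtain ⟨hvl, hvs⟩ := mem_AF.1 hv
  constructor
  · have : u.take j = u := by rw [← hul]; exact List.take_length
    rw [sum_take_of_append_left (le_of_eq hul.symm), this]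
    exact husum
  · intro k hk1 hk2
    obtain ⟨i, rfl⟩ : ∃ i, k = j + i := ⟨k - j, by omega⟩
    have h1 : ((u ++ v).take (j + i)).sum = u.sum + (v.take i).sum := by
      rw [← hul]; exact sum_take_append_right u v i
    have h2 := hvs i (by omega) (by omega)
    omega

open scoped Classical in
lemma card_AF_rec (l : ℕ) :
    (AF (l+1)).card = ∑ j ∈ Finset.Icc 1 (l+1), (AF' j).card * (AF (l+1-j)).card := by
  rw [AF_decomp (l+1) (by omega), Finset.card_biUnion]
  · apply Finset.sum_congr rfl
    intro j _
    rw [Finset.card_image_of_injOn, Finset.card_product]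
    rintro ⟨u, v⟩ hp ⟨u', v'⟩ hq h
    simp only [Finset.coe_product, Set.mem_prod, Finset.mem_coe] at hp hq
    have hul := (mem_AF'.1 hp.1).1
    have hul' := (mem_AF'.1 hq.1).1
    dsimp only at h
    obtain ⟨h1, h2⟩ := List.append_inj h (by rw [hul, hul'])
    simp [Prod.ext_iff, h1, h2]
  · intro x hx y hy hxy
    rw [Function.onFun, Finset.disjoint_left]
    intro w h1 h2
    simp only [Finset.mem_coe, Finset.mem_Icc] at hx hy
    have p1 := AF_piece_props (l := l+1) (by omega) h1
    have p2 := AF_piece_props (l := l+1) (by omega) h2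
    rcases Nat.lt_or_ge x y with h | h
    · exact (p1.2 y h hy.2) p2.1
    · have hyx : y < x := by omega
      exact (p2.2 x hyx hx.2) p1.1

lemma AF_zero : AF 0 = {[]} := by
  ext w
  rw [mem_AF, Finset.mem_singleton]
  constructor
  · rintro ⟨h, -⟩; exact List.length_eq_zero_iff.1 h
  · rintro rfl; exact ⟨rfl, by intro k h1 h2; omega⟩

lemma card_AF : ∀ l, (AF l).card = catalan l := by
  intro l
  induction l using Nat.strong_induction_on with
  | _ l ih =>
    match l with
    | 0 => rw [AF_zero, catalan_zero]; simp
    | (m+1) =>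
      rw [card_AF_rec m, catalan_succ', Finset.Nat.sum_antidiagonal_eq_sum_range_succ_mk]
      have : Finset.Icc 1 (m+1) = Finset.Ico 1 (m+2) := by
        ext x; simp [Finset.mem_Icc, Finset.mem_Ico]; omega
      rw [this, Finset.sum_Ico_eq_sum_range]
      have h2 : m + 2 - 1 = m + 1 := by omega
      rw [h2]
      apply Finset.sum_congr rfl
      intro i hi
      rw [Finset.mem_range] at hi
      have e1 : 1 + i = i + 1 := by omega
      rw [e1, card_AF'_succ i, ih i (by omega)]
      have e2 : m + 1 - (i + 1) = m - i := by omega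
      rw [e2, ih (m - i) (by omega)]

lemma card_PF_catalan (l : ℕ) : (PF l).card = catalan l := by
  rw [card_PF, card_AF]

lemma getD_block_lt {x : Bool} {r : List Bool} {l j : ℕ} (h : j < l) :
    (List.replicate l x ++ r).getD j false = x := by
  rw [List.getD_append _ _ _ j (by simpa using h)]
  rw [List.getD_eq_getElem?_getD, List.getElem?_replicate, if_pos h]
  rfl

lemma getD_block_ge {x : Bool} {r : List Bool} {l j : ℕ} (h : l ≤ j) :
    (List.replicate l x ++ r).getD j false = r.getD (j - l) false := by
  rw [List.getD_append_right _ _ _ _ (by simpa using h)]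
  simp

lemma EndsFalse_block {r : List Bool} (hr : EndsFalse r) (x : Bool) (l : ℕ) :
    EndsFalse (List.replicate l x ++ r) := by
  rw [EndsFalse, List.getLast?_append, hr]
  rfl

lemma EndsFalse_of_block {x y : Bool} {c : List Bool} {l : ℕ}
    (h : EndsFalse (List.replicate l x ++ (y :: c))) : EndsFalse (y :: c) := by
  rw [EndsFalse, List.getLast?_append] at h
  rw [EndsFalse]
  cases hyc : (y :: c).getLast? with
  | none => simp at hyc
  | some z => rw [hyc] at h; simpa using h

lemma okF_true_block {l : ℕ} (hl : 1 ≤ l) (c : List Bool) (hb : EndsFalse (false :: c)) :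
    okF (List.replicate l true ++ (false :: c)) =
      ((PF l) ×ˢ (okF (false :: c))).image (fun p => p.1 ++ p.2) := by
  have hbb : EndsFalse (List.replicate l true ++ (false :: c)) := EndsFalse_block hb _ l
  have hblen : (List.replicate l true ++ (false :: c)).length = l + (c.length + 1) := by simp
  ext w
  rw [mem_okF hbb, Finset.mem_image]
  constructor
  · rintro ⟨hlen, hok⟩
    rw [hblen] at hlen
    have hSl : l ≤ (w.take l).sum := by
      have h1 := (hok (l-1) (by rw [hblen]; omega)).2
      rw [getD_block_lt (by omega)] at h1
      have e : l - 1 + 1 = l := by omega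
      rw [e] at h1
      exact h1 rfl
    have hS1 : ¬ (l + 1 ≤ (w.take (l+1)).sum) := by
      have h1 := hok l (by rw [hblen]; omega)
      rw [getD_block_ge le_rfl, Nat.sub_self] at h1
      intro hcon
      simpa using h1.1 hcon
    have hmono := sum_take_mono w (by omega : l ≤ l + 1)
    have hSl_eq : (w.take l).sum = l := by omega
    refine ⟨(w.take l, w.drop l), Finset.mem_product.2 ⟨?_, ?_⟩, List.take_append_drop l w⟩
    · rw [mem_PF]
      dsimp only
      refine ⟨by rw [List.length_take]; omega, ?_, ?_⟩
      · intro k hk1 hk2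
        rw [List.take_take, min_eq_left hk2]
        have h1 := (hok (k-1) (by rw [hblen]; omega)).2
        rw [getD_block_lt (by omega)] at h1
        have e : k - 1 + 1 = k := by omega
        rw [e] at h1
        exact h1 rfl
      · exact hSl_eq
    · rw [mem_okF hb]
      dsimp only
      refine ⟨by simp only [List.length_drop, List.length_cons, hlen]; omega, ?_⟩
      intro j hj
      simp only [List.length_cons] at hj
      have h1 := hok (l + j) (by rw [hblen]; omega)
      have h2 : (List.replicate l true ++ (false :: c)).getD (l+j) false
          = (false :: c).getD j false := by
        rw [getD_block_ge (by omega)]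
        congr 1
        omega
      have h3 : (w.take (l + (j+1))).sum = l + ((w.drop l).take (j+1)).sum := by
        rw [sum_take_add w l (j+1), hSl_eq]
      rw [h2] at h1
      have e : l + j + 1 = l + (j+1) := by omega
      rw [e, h3] at h1
      rw [← h1]
      omega
  · rintro ⟨⟨u, v⟩, hmem, rfl⟩
    obtain ⟨hu, hv⟩ := Finset.mem_product.1 hmem
    dsimp only at hu hv ⊢
    obtain ⟨hul, hus, husum⟩ := mem_PF.1 hu
    obtain ⟨hvl, hvok⟩ := (mem_okF hb).1 hv
    simp only [List.length_cons] at hvl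
    refine ⟨by simp [hul, hvl], ?_⟩
    intro j hj
    rw [hblen] at hj
    rcases Nat.lt_or_ge j l with hjl | hjl
    · rw [getD_block_lt hjl]
      have h1 : ((u ++ v).take (j+1)).sum = (u.take (j+1)).sum :=
        sum_take_of_append_left (by omega)
      have h2 := hus (j+1) (by omega) (by omega)
      rw [h1]
      simp only [iff_true]
      exact h2
    · obtain ⟨i, rfl⟩ : ∃ i, j = l + i := ⟨j - l, by omega⟩
      have h2 : (List.replicate l true ++ (false :: c)).getD (l+i) false
          = (false :: c).getD i false := by
        rw [getD_block_ge (by omega)]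
        congr 1
        omega
      rw [h2]
      have h3 : ((u ++ v).take (l + (i+1))).sum = l + (v.take (i+1)).sum := by
        rw [← hul, sum_take_append_right, hul, husum]
      have e : l + i + 1 = l + (i+1) := by omega
      rw [e, h3]
      have h4 := hvok i (by simpa using by omega : i < (false :: c).length)
      rw [← h4]
      omega

lemma card_true_block {l : ℕ} (hl : 1 ≤ l) (c : List Bool) (hb : EndsFalse (false :: c)) :
    (okF (List.replicate l true ++ (false :: c))).card
      = catalan l * (okF (false :: c)).card := by
  rw [okF_true_block hl c hb, Finset.card_image_of_injOn, Finset.card_product,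
    card_PF_catalan]
  rintro ⟨u, v⟩ hp ⟨u', v'⟩ hq h
  simp only [Finset.coe_product, Set.mem_prod, Finset.mem_coe] at hp hq
  have hul := (mem_PF.1 hp.1).1
  have hul' := (mem_PF.1 hq.1).1
  dsimp only at h
  obtain ⟨h1, h2⟩ := List.append_inj h (by rw [hul, hul'])
  simp [Prod.ext_iff, h1, h2]

lemma card_false_block {l : ℕ} (hl : 1 ≤ l) (c : List Bool) (hb : EndsFalse (true :: c)) :
    (okF (List.replicate l false ++ (true :: c))).card
      = catalan l * (okF (true :: c)).card := by
  have hbb : EndsFalse (List.replicate l false ++ (true :: c)) := EndsFalse_block hb _ l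
  have hblen : (List.replicate l false ++ (true :: c)).length = l + (c.length + 1) := by simp
  rw [← card_AF l, ← Finset.card_product]
  refine Finset.card_bij'
    (fun w _ => (w.take l, ((w.take (l+1)).sum - l) :: w.drop (l+1)))
    (fun p _ => p.1 ++ ((p.2.headD 0) + l - p.1.sum) :: p.2.tail) ?_ ?_ ?_ ?_
  · -- forward membership
    intro w hw
    obtain ⟨hlen, hok⟩ := (mem_okF hbb).1 hw
    rw [hblen] at hlen
    have fact1 : ∀ k, 1 ≤ k → k ≤ l → (w.take k).sum < k := by
      intro k hk1 hk2
      have h1 := hok (k-1) (by rw [hblen]; omega)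
      rw [getD_block_lt (by omega)] at h1
      have e : k - 1 + 1 = k := by omega
      rw [e] at h1
      have := h1.1
      by_contra hcon
      simp only [not_lt] at hcon
      simpa using this hcon
    have fact2 : l + 1 ≤ (w.take (l+1)).sum := by
      have h1 := hok l (by rw [hblen]; omega)
      rw [getD_block_ge le_rfl, Nat.sub_self] at h1
      exact h1.2 rfl
    rw [Finset.mem_product]
    constructor
    · rw [mem_AF]
      dsimp only
      refine ⟨by rw [List.length_take]; omega, ?_⟩
      intro k hk1 hk2
      rw [List.take_take, min_eq_left hk2]
      exact fact1 k hk1 hk2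
    · rw [mem_okF hb]
      dsimp only
      refine ⟨by simp only [List.length_cons, List.length_drop, hlen]; omega, ?_⟩
      intro j hj
      simp only [List.length_cons] at hj
      match j, hj with
      | 0, _ =>
        simp only [List.take_succ_cons, List.take_zero, List.sum_cons, List.sum_nil]
        have : (true :: c).getD 0 false = true := rfl
        rw [this]
        simp only [iff_true]
        omega
      | (i+1), hj =>
        have h1 := hok (l + (i+1)) (by rw [hblen]; omega)
        have h2 : (List.replicate l false ++ (true :: c)).getD (l+(i+1)) false
            = c.getD i false := by
          rw [getD_block_ge (by omega)]
          have e : l + (i + 1) - l = i + 1 := by omega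
          rw [e]
          rfl
        rw [h2] at h1
        have h3 := sum_take_add w (l+1) (i+1)
        have e2 : l + 1 + (i + 1) = l + (i + 1) + 1 := by omega
        rw [e2] at h3
        have h4 : (((w.take (l+1)).sum - l) :: w.drop (l+1)).take (i+1+1)
            = ((w.take (l+1)).sum - l) :: (w.drop (l+1)).take (i+1) := List.take_succ_cons
        rw [h4]
        have h5 : (true :: c).getD (i+1) false = c.getD i false := rfl
        rw [h5, ← h1]
        simp only [List.sum_cons]
        omega
  · -- backward membership
    rintro ⟨u, v⟩ hp
    rw [Finset.mem_product] at hp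
    obtain ⟨hu, hv⟩ := hp
    dsimp only at hu hv
    obtain ⟨hul, hus⟩ := mem_AF.1 hu
    obtain ⟨hvl, hvok⟩ := (mem_okF hb).1 hv
    simp only [List.length_cons] at hvl
    match v, hvl with
    | v₁ :: t, hvl =>
      have htl : t.length = c.length := by simpa using hvl
      have husum : u.sum < l := by
        have := hus l hl le_rfl
        rw [← hul, List.take_length] at this
        omega
      have hv1 : 1 ≤ v₁ := by
        have := (hvok 0 (by simp)).2 rfl
        simpa using this
      dsimp only
      rw [mem_okF hbb]
      have hw'len : (u ++ ((v₁ :: t).headD 0 + l - u.sum) :: (v₁ :: t).tail).length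
          = l + (c.length + 1) := by
        simp [hul, htl]
      refine ⟨by rw [hw'len, hblen], ?_⟩
      intro j hj
      rw [hblen] at hj
      simp only [List.headD_cons, List.tail_cons]
      rcases Nat.lt_or_ge j l with hjl | hjl
      · rw [getD_block_lt hjl]
        have h1 : ((u ++ (v₁ + l - u.sum) :: t).take (j+1)).sum = (u.take (j+1)).sum :=
          sum_take_of_append_left (by omega)
        have h2 := hus (j+1) (by omega) (by omega)
        rw [h1]
        simp only [iff_false, Bool.false_eq_true]
        omega
      · obtain ⟨i, rfl⟩ : ∃ i, j = l + i := ⟨j - l, by omega⟩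
        have h2 : (List.replicate l false ++ (true :: c)).getD (l+i) false
            = (true :: c).getD i false := by
          rw [getD_block_ge (by omega)]
          congr 1
          omega
        rw [h2]
        have h3 : ((u ++ (v₁ + l - u.sum) :: t).take (l + (i+1))).sum
            = u.sum + (((v₁ + l - u.sum) :: t).take (i+1)).sum := by
          rw [← hul, sum_take_append_right, hul]
        have e : l + i + 1 = l + (i+1) := by omega
        rw [e, h3]
        have h4 := hvok i (by simp only [List.length_cons]; omega)
        have h5 : ((v₁ :: t).take (i+1)).sum = v₁ + (t.take i).sum := by
          rw [List.take_succ_cons]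
          simp
        rw [h5] at h4
        rw [List.take_succ_cons]
        simp only [List.sum_cons]
        rw [← h4]
        omega
  · -- left inverse : starting from w
    intro w hw
    obtain ⟨hlen, hok⟩ := (mem_okF hbb).1 hw
    rw [hblen] at hlen
    dsimp only [List.headD_cons, List.tail_cons]
    have hlt : l < w.length := by omega
    have hdrop := List.drop_eq_getElem_cons hlt
    have hsum : (w.take (l+1)).sum = (w.take l).sum + w[l] := List.sum_take_succ w l hlt
    have fact1 : (w.take l).sum < l := by
      have h1 := hok (l-1) (by rw [hblen]; omega)
      rw [getD_block_lt (by omega)] at h1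
      have e : l - 1 + 1 = l := by omega
      rw [e] at h1
      have := h1.1
      by_contra hcon
      simp only [not_lt] at hcon
      simpa using this hcon
    have fact2 : l + 1 ≤ (w.take (l+1)).sum := by
      have h1 := hok l (by rw [hblen]; omega)
      rw [getD_block_ge le_rfl, Nat.sub_self] at h1
      exact h1.2 rfl
    have hx : (w.take (l+1)).sum - l + l - (w.take l).sum = w[l] := by omega
    rw [hx, ← hdrop, List.take_append_drop]
  · -- right inverse : starting from (u, v)
    rintro ⟨u, v⟩ hp
    rw [Finset.mem_product] at hp
    obtain ⟨hu, hv⟩ := hp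
    dsimp only at hu hv
    obtain ⟨hul, hus⟩ := mem_AF.1 hu
    obtain ⟨hvl, hvok⟩ := (mem_okF hb).1 hv
    simp only [List.length_cons] at hvl
    match v, hvl with
    | v₁ :: t, hvl =>
      dsimp only [List.headD_cons, List.tail_cons]
      have husum : u.sum ≤ l := by
        rcases Nat.eq_zero_or_pos l with rfl | hl0
        · omega
        · have := hus l hl0 le_rfl
          rw [← hul, List.take_length] at this
          omega
      have ht : (u ++ (v₁ + l - u.sum) :: t).take l = u := List.take_left' hul
      have hd : (u ++ (v₁ + l - u.sum) :: t).drop (l+1) = t := by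
        have h1 : (u ++ (v₁ + l - u.sum) :: t).drop l = (v₁ + l - u.sum) :: t :=
          List.drop_left' hul
        have h2 : (u ++ (v₁ + l - u.sum) :: t).drop (l+1)
            = ((u ++ (v₁ + l - u.sum) :: t).drop l).drop 1 := by
          rw [List.drop_drop]
        rw [h2, h1]
        rfl
      have hs : ((u ++ (v₁ + l - u.sum) :: t).take (l+1)).sum = l + v₁ := by
        have h3 : ((u ++ (v₁ + l - u.sum) :: t).take (l + 1)).sum
            = u.sum + (((v₁ + l - u.sum) :: t).take 1).sum := by
          rw [← hul, sum_take_append_right, hul]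
        rw [h3]
        simp only [List.take_succ_cons, List.take_zero, List.sum_cons, List.sum_nil]
        omega
      rw [ht, hd, hs]
      have : l + v₁ - l = v₁ := by omega
      rw [this]

lemma getD_replicate' {x : Bool} {n j : ℕ} (h : j < n) :
    (List.replicate n x).getD j false = x := by
  rw [List.getD_eq_getElem?_getD, List.getElem?_replicate, if_pos h]
  rfl

lemma okF_replicate_false {n : ℕ} (hn : 1 ≤ n) :
    okF (List.replicate n false) = AF n := by
  have hb : EndsFalse (List.replicate n false) := by
    rw [EndsFalse, List.getLast?_replicate, if_neg (by omega)]
  ext w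
  rw [mem_okF hb, mem_AF]
  simp only [List.length_replicate]
  constructor
  · rintro ⟨h1, h2⟩
    refine ⟨h1, fun k hk1 hk2 => ?_⟩
    have h3 := h2 (k-1) (by simp only [List.length_replicate]; omega)
    rw [getD_replicate' (show k - 1 < n by omega)] at h3
    have e : k - 1 + 1 = k := by omega
    rw [e] at h3
    by_contra hcon
    simp only [not_lt] at hcon
    simpa using h3.1 hcon
  · rintro ⟨h1, h2⟩
    refine ⟨h1, fun j hj => ?_⟩
    simp only [List.length_replicate] at hj
    rw [getD_replicate' hj]
    have := h2 (j+1) (by omega) (by omega)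
    simp only [Bool.false_eq_true, iff_false]
    omega

section SplitBy

variable {α : Type*} (R : α → α → Bool)

lemma splitBy_loop_acc : ∀ (l : List α) (a : α) (g : List α) (gs : List (List α)),
    List.splitBy.loop R l a g gs = gs.reverse ++ List.splitBy.loop R l a g [] := by
  intro l
  induction l with
  | nil => intro a g gs; simp [List.splitBy.loop]
  | cons a' as ih =>
    intro a g gs
    cases h : R a a' with
    | true => simp only [List.splitBy.loop, h]; rw [ih]
    | false =>
      simp only [List.splitBy.loop, h]
      rw [ih, ih a' [] [(a :: g).reverse]]
      simp

lemma splitBy_loop_replicate {x : α} (hxx : R x x = true) :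
    ∀ (l : ℕ) (rest : List α) (g : List α) (gs : List (List α)),
      List.splitBy.loop R (List.replicate l x ++ rest) x g gs
        = List.splitBy.loop R rest x (List.replicate l x ++ g) gs := by
  intro l
  induction l with
  | zero => intro rest g gs; simp
  | succ m ih =>
    intro rest g gs
    have e1 : List.replicate (m+1) x ++ rest = x :: (List.replicate m x ++ rest) := by
      simp [List.replicate_succ]
    rw [e1]
    simp only [List.splitBy.loop, hxx]
    rw [ih rest (x :: g) gs]
    congr 1
    rw [List.replicate_succ' (n := m) (a := x)]
    simp

lemma splitBy_replicate {x : α} (hxx : R x x = true) {l : ℕ} (hl : 1 ≤ l) :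
    List.splitBy R (List.replicate l x) = [List.replicate l x] := by
  obtain ⟨m, rfl⟩ : ∃ m, l = m + 1 := ⟨l - 1, by omega⟩
  have e1 : List.replicate (m+1) x = x :: List.replicate m x := by
    simp [List.replicate_succ]
  rw [e1]
  show List.splitBy.loop R (List.replicate m x) x [] [] = _
  have e2 : (List.replicate m x : List α) = List.replicate m x ++ [] :=
    (List.append_nil _).symm
  rw [e2, splitBy_loop_replicate R hxx]
  simp only [List.splitBy.loop]
  simp [List.reverse_replicate]
  rw [← List.replicate_succ', List.replicate_succ]

lemma splitBy_block {x y : α} (hxx : R x x = true) (hxy : R x y = false)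
    {l : ℕ} (hl : 1 ≤ l) (c : List α) :
    List.splitBy R (List.replicate l x ++ (y :: c))
      = List.replicate l x :: List.splitBy R (y :: c) := by
  obtain ⟨m, rfl⟩ : ∃ m, l = m + 1 := ⟨l - 1, by omega⟩
  have e1 : List.replicate (m+1) x ++ (y :: c) = x :: (List.replicate m x ++ (y :: c)) := by
    simp [List.replicate_succ]
  rw [e1]
  show List.splitBy.loop R (List.replicate m x ++ (y :: c)) x [] [] = _
  rw [splitBy_loop_replicate R hxx]
  simp only [List.splitBy.loop, hxy]
  rw [splitBy_loop_acc]
  show _ = List.replicate (m+1) x :: List.splitBy.loop R c y [] []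
  simp [List.reverse_replicate, List.replicate_succ' (n := m) (a := x)]

end SplitBy

lemma exists_first_run (x : Bool) :
    ∀ (t : List Bool), ∃ l r, 1 ≤ l ∧ x :: t = List.replicate l x ++ r ∧
      (r = [] ∨ ∃ y c, r = y :: c ∧ y ≠ x) := by
  intro t
  induction t with
  | nil => exact ⟨1, [], le_rfl, by simp, Or.inl rfl⟩
  | cons y t' ih =>
    by_cases hxy : y = x
    · subst hxy
      obtain ⟨l, r, hl, heq, hr⟩ := ih
      refine ⟨l + 1, r, by omega, ?_, hr⟩
      rw [List.replicate_succ]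
      simp only [List.cons_append]
      rw [← heq]
    · exact ⟨1, y :: t', le_rfl, by simp, Or.inr ⟨y, t', rfl, hxy⟩⟩

lemma main_aux : ∀ (n : ℕ) (b : List Bool), b.length ≤ n → EndsFalse b →
    (okF b).card = ((b.splitBy (· == ·)).map (fun g => catalan g.length)).prod := by
  intro n
  induction n with
  | zero =>
    intro b hlen hb
    have : b = [] := List.length_eq_zero_iff.1 (by omega)
    subst this
    simp [EndsFalse] at hb
  | succ n ih =>
    intro b hlen hb
    match b with
    | [] => simp [EndsFalse] at hb
    | x :: t =>
      obtain ⟨l, r, hl, heq, hr⟩ := exists_first_run x t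
      rcases hr with rfl | ⟨y, c, rfl, hyx⟩
      · -- b is a single run
        rw [List.append_nil] at heq
        have hx : x = false := by
          rw [heq, EndsFalse, List.getLast?_replicate, if_neg (by omega)] at hb
          simpa using hb
        subst hx
        rw [heq, okF_replicate_false hl, splitBy_replicate _ (by simp) hl]
        simp [card_AF]
      · have hr : EndsFalse (y :: c) := EndsFalse_of_block (heq ▸ hb)
        have hlen2 : (y :: c).length ≤ n := by
          have : (x :: t).length = l + (y :: c).length := by rw [heq]; simp
          simp only [List.length_cons] at this hlen ⊢
          omega
        have hrec := ih (y :: c) hlen2 hr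
        have hsplit : (List.replicate l x ++ (y :: c)).splitBy (· == ·)
            = List.replicate l x :: (y :: c).splitBy (· == ·) :=
          splitBy_block _ (by simp) (by cases x <;> cases y <;> simp_all) hl c
        cases x with
        | false =>
          have hy : y = true := by cases y <;> simp_all
          subst hy
          rw [heq, card_false_block hl c hr, hsplit, List.map_cons, List.prod_cons, hrec]
          simp
        | true =>
          have hy : y = false := by cases y <;> simp_all
          subst hy
          rw [heq, card_true_block hl c hr, hsplit, List.map_cons, List.prod_cons, hrec]
          simp

end CatWords

/-- Let `D ⊆ {1,…,n}` with `n ∉ D`.  The number of words `w ∈ ℕⁿ` such that for each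
`k ∈ {1,…,n}` the partial sum `w₁+…+w_k` is `≥ k` exactly when `k ∈ D` (and `< k`
otherwise, in particular for `k = n`) equals the product `∏ᵢ C_{ℓᵢ}` of Catalan numbers,
where the `ℓᵢ` are the lengths of the maximal blocks of consecutive positions in
`{1,…,n}` having the same membership status in `D`. -/
theorem card_words_descents_eq_prod_catalan (n : ℕ) (hn : 1 ≤ n)
    (D : Finset ℕ) (hD : D ⊆ Finset.Icc 1 n) (hnD : n ∉ D) :
    Set.ncard {w : List ℕ | w.length = n ∧
        ∀ k ∈ Finset.Icc 1 n, (k ≤ (w.take k).sum ↔ k ∈ D)} =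
      ((((List.range n).map (fun j => decide ((j + 1) ∈ D))).splitBy (· == ·)).map
        (fun b => catalan b.length)).prod := by
  classical
  set b : List Bool := (List.range n).map (fun j => decide ((j + 1) ∈ D)) with hbdef
  have hblen : b.length = n := by simp [hbdef]
  have hgetD : ∀ j, j < n → b.getD j false = decide ((j + 1) ∈ D) := by
    intro j hj
    rw [hbdef, List.getD_eq_getElem?_getD, List.getElem?_map, List.getElem?_range hj]
    rfl
  have hEnds : CatWords.EndsFalse b := by
    rw [CatWords.EndsFalse, List.getLast?_eq_getElem?, hblen, hbdef, List.getElem?_map,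
      List.getElem?_range (by omega : n - 1 < n)]
    have e : n - 1 + 1 = n := by omega
    simp [e, hnD]
  have hset : {w : List ℕ | w.length = n ∧
      ∀ k ∈ Finset.Icc 1 n, (k ≤ (w.take k).sum ↔ k ∈ D)} = ↑(CatWords.okF b) := by
    ext w
    simp only [Set.mem_setOf_eq, Finset.mem_coe]
    rw [CatWords.mem_okF hEnds, hblen]
    constructor
    · rintro ⟨h1, h2⟩
      refine ⟨h1, fun j hj => ?_⟩
      rw [hblen] at hj
      rw [hgetD j hj, decide_eq_true_iff]
      exact h2 (j+1) (Finset.mem_Icc.2 ⟨by omega, by omega⟩)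
    · rintro ⟨h1, h2⟩
      refine ⟨h1, fun k hk => ?_⟩
      rw [Finset.mem_Icc] at hk
      have h3 := h2 (k-1) (by rw [hblen]; omega)
      rw [hgetD (k-1) (by omega), decide_eq_true_iff] at h3
      have e : k - 1 + 1 = k := by omega
      rw [e] at h3
      exact h3
  rw [hset, Set.ncard_coe_finset]
  exact CatWords.main_aux b.length b le_rfl hEnds
end

section
/- The set of words w ∈ ℕ^n with w_1 + … + w_n < n is the disjoint union over all compositions I of n of the sets W(I). -/
/-- The set of words `w ∈ ℕⁿ` with `w₁+…+w_n < n` is the disjoint union, over all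
compositions `I` of `n` (identified with their descent sets `D ⊆ {1,…,n-1}`), of the
sets `W(I) = {w : w₁+…+w_k ≥ k iff k ∈ D(I), for all k ∈ {1,…,n}}`: each such word
belongs to `W(I)` for exactly one composition `I`, and conversely every word in some
`W(I)` has `w₁+…+w_n < n`. -/
theorem words_sum_lt_disjoint_union (n : ℕ) (hn : 1 ≤ n) (w : List ℕ) (hw : w.length = n) :
    w.sum < n ↔
      ∃! D : Finset ℕ, D ⊆ Finset.Icc 1 (n - 1) ∧
        ∀ k ∈ Finset.Icc 1 n, (k ≤ (w.take k).sum ↔ k ∈ D) := by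
  have htake : w.take n = w := by rw [← hw]; exact w.take_length
  constructor
  · intro hsum
    refine ⟨(Finset.Icc 1 (n - 1)).filter (fun k => k ≤ (w.take k).sum),
      ⟨Finset.filter_subset _ _, ?_⟩, ?_⟩
    · intro k hk
      simp only [Finset.mem_filter, Finset.mem_Icc] at *
      constructor
      · intro h
        refine ⟨⟨hk.1, ?_⟩, h⟩
        by_contra hcon
        have hkn : k = n := by omega
        rw [hkn, htake] at h
        omega
      · exact fun h => h.2
    · intro D' ⟨hD'sub, hD'⟩
      ext a
      simp only [Finset.mem_filter]
      constructor
      · intro ha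
        have hmem := Finset.mem_Icc.mp (hD'sub ha)
        have hle := (hD' a (Finset.mem_Icc.mpr (by omega))).mpr ha
        exact ⟨Finset.mem_Icc.mpr hmem, hle⟩
      · rintro ⟨hmem, hle⟩
        have h1 := Finset.mem_Icc.mp hmem
        exact (hD' a (Finset.mem_Icc.mpr (by omega))).mp hle
  · rintro ⟨D, ⟨hDsub, hD⟩, _⟩
    have hn' : n ∈ Finset.Icc 1 n := Finset.mem_Icc.mpr ⟨hn, le_refl n⟩
    have := hD n hn'
    rw [htake] at this
    by_contra hcon
    have : n ∈ D := this.mp (by omega)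
    have := Finset.mem_Icc.mp (hDsub this)
    omega
end
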